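/- Let λ, ρ_d, ρ_t, ρ_r, L_uc be positive real numbers and Q > 0. Define the free-space path-loss of the IRS-assisted link with the maximal discrete-IRS response g = √(4π)·L_uc²·Q/λ as PL_IRS = (4π·g²/λ²)·(λ/(4π·ρ_t))²·(λ/(4π·ρ_r))², and the free-space path-loss of the direct link as PL_d = (λ/(4π·ρ_d))². Then PL_IRS = PL_d if and only if Q = λ·ρ_t·ρ_r/(L_uc²·ρ_d); moreover, if L_uc = λ/2, this condition is Q = 4·ρ_t·ρ_r/(λ·ρ_d). -/

import Mathlib

/-!
Substituting `g² = 4π L_uc⁴ Q² / λ²` into Lemma 1, every factor of `λ` cancels and the IRS path-loss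
collapses to the square `(L_uc² Q / (4π ρ_t ρ_r))²`, just as the direct path-loss is `(λ / (4π ρ_d))²`.
Both bases are positive, so the path-losses agree exactly when the bases do, which is a linear
equation in `Q`.
-/

open Real

theorem irs_pathLoss_eq_sq {lam ρt ρr Luc Q : ℝ} (hlam : lam ≠ 0) :
    (4 * π * (√(4 * π) * Luc ^ 2 * Q / lam) ^ 2 / lam ^ 2) *
        (lam / (4 * π * ρt)) ^ 2 * (lam / (4 * π * ρr)) ^ 2 =
      (Luc ^ 2 * Q / (4 * π * ρt * ρr)) ^ 2 := by
  rw [div_pow, mul_pow, mul_pow, sq_sqrt (by positivity)]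
  field_simp

/-- Corollary 4: with the maximal discrete-IRS response `g = √(4π)·L_uc²·Q/λ`,
`PL_IRS = PL_d` iff `Q = λρ_tρ_r/(L_uc²ρ_d)`; for `L_uc = λ/2` this reads
`Q = 4ρ_tρ_r/(λρ_d)`. -/
theorem min_number_unit_cells
    (lam ρd ρt ρr Luc Q : ℝ)
    (hlam : 0 < lam) (hρd : 0 < ρd) (hρt : 0 < ρt) (hρr : 0 < ρr)
    (hLuc : 0 < Luc) (hQ : 0 < Q)
    (g PLirs PLd : ℝ)
    (hg : g = Real.sqrt (4 * Real.pi) * Luc ^ 2 * Q / lam)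
    (hPLirs : PLirs = (4 * Real.pi * g ^ 2 / lam ^ 2) *
        (lam / (4 * Real.pi * ρt)) ^ 2 * (lam / (4 * Real.pi * ρr)) ^ 2)
    (hPLd : PLd = (lam / (4 * Real.pi * ρd)) ^ 2) :
    (PLirs = PLd ↔ Q = lam * ρt * ρr / (Luc ^ 2 * ρd))
    ∧ (Luc = lam / 2 → (PLirs = PLd ↔ Q = 4 * ρt * ρr / (lam * ρd))) := by
  have pathLoss_eq_iff : PLirs = PLd ↔ Q = lam * ρt * ρr / (Luc ^ 2 * ρd) := by
    rw [hPLirs, hPLd, hg, irs_pathLoss_eq_sq hlam.ne', sq_eq_sq₀ (by positivity) (by positivity)]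
    field_simp
  refine ⟨pathLoss_eq_iff, fun hL => pathLoss_eq_iff.trans ?_⟩
  have half_wavelength : lam * ρt * ρr / ((lam / 2) ^ 2 * ρd) = 4 * ρt * ρr / (lam * ρd) := by
    field_simp
    ring
  rw [hL, half_wavelength]
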